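/- Let φ be a traveling wave with speed ℓ. Then there exist constants β_0^+ > 0, δ_0^+ > 0, β_0^− > 0, δ_0^− > 0, independent of the initial shifts, such that: for every ξ_0^+ ∈ ℝ there is a bounded nondecreasing sequence (ξ_n^+)_{n≥0} starting at ξ_0^+ for which w̄_n(x) := φ(x − nℓ + ξ_n^+) + β_0^+ e^{−δ_0^+ n} satisfies w̄_{n+1}(x) ≥ g((q * w̄_n)(x)) for all n ≥ 0 and x ∈ ℝ; and for every ξ_0^− ∈ ℝ there is a bounded nonincreasing sequence (ξ_n^−)_{n≥0} starting at ξ_0^− for which w_̲n(x) := φ(x − nℓ + ξ_n^−) − β_0^− e^{−δ_0^− n} satisfies w_̲{n+1}(x) ≤ g((q * w_̲n)(x)) for all n ≥ 0 and x ∈ ℝ. -/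

import Mathlib

/-!
Write `ψ = q_ℓ * φ`, so that `φ = g ∘ ψ`. Near the stable states `0` and `1` the slope of `g` is
at most `e^{-δ} < 1`, so raising `ψ` by `β` raises `g ∘ ψ` by at most `e^{-δ} β`. Away from them
the wave equation confines `z` to a compact set, on which `φ' ≥ m > 0`, and the shift `σ β` with
`σ = L / m` (`L` a Lipschitz constant of `g`) absorbs the increment `L β`. With
`β_n = β₀ e^{-δ n}` the shifts `ξ_{n+1} = ξ_n ± σ β_n` have summable increments.

That `φ' > 0` comes from `φ' = g'(ψ) · (q_ℓ * φ')` with `g' > 0` on `(0, 1)`: the zeros of `φ'`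
propagate along the translates by the support of `q_ℓ` and would fill a half-line, on which `φ`
would be constantly `0` or `1`; but `0 < φ < 1` by a comparison argument at the edge of the
zero set.
-/

open MeasureTheory Filter Topology

/-- Convolution `(q * u)(x) = ∫ q(y) u(x - y) dy`. -/
noncomputable def conv (q u : ℝ → ℝ) (x : ℝ) : ℝ := ∫ y : ℝ, q y * u (x - y)

/-- The shifted kernel `q_ℓ(x) = q(x + ℓ)`. -/
def qshift (q : ℝ → ℝ) (ℓ : ℝ) (x : ℝ) : ℝ := q (x + ℓ)

/-- The bistable setting: a `C¹` compactly supported probability density `q`, and a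
polynomial `P` (the recursion polynomial, i.e. `g` on `[0,1]`) with `P(0) = 0`, `P(1) = 1`,
`0 < P < 1` and `P' > 0` on `(0,1)`; the nonlinearity `f(x) = P(x) - x` has a unique zero
`θ ∈ (0,1)` and `f'(0) < 0`, `f'(1) < 0` (equivalently `P'(0) < 1`, `P'(1) < 1`). -/
structure BistableSetting where
  q : ℝ → ℝ
  P : Polynomial ℝ
  θ : ℝ
  hq_diff : ContDiff ℝ 1 q
  hq_supp : HasCompactSupport q
  hq_nonneg : ∀ x, 0 ≤ q x
  hq_int : ∫ x : ℝ, q x = 1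
  hP0 : P.eval 0 = 0
  hP1 : P.eval 1 = 1
  hP_range : ∀ x ∈ Set.Ioo (0 : ℝ) 1, 0 < P.eval x ∧ P.eval x < 1
  hP_mono : ∀ x ∈ Set.Ioo (0 : ℝ) 1, 0 < (Polynomial.derivative P).eval x
  hθ_mem : θ ∈ Set.Ioo (0 : ℝ) 1
  hθ_zero : P.eval θ = θ
  hθ_unique : ∀ x ∈ Set.Ioo (0 : ℝ) 1, P.eval x = x → x = θ
  hf'0 : (Polynomial.derivative P).eval 0 < 1
  hf'1 : (Polynomial.derivative P).eval 1 < 1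

/-- The nonlinearity `g`, equal to the polynomial `P` on `[0,1]` and extended linearly:
`g(x) = x + f'(0)·x` for `x < 0` and `g(x) = x + f'(1)(x-1)` for `x > 1`. -/
noncomputable def BistableSetting.g (S : BistableSetting) (x : ℝ) : ℝ :=
  if x < 0 then (Polynomial.derivative S.P).eval 0 * x
  else if x ≤ 1 then S.P.eval x
  else 1 + (Polynomial.derivative S.P).eval 1 * (x - 1)

/-- A traveling wave with speed `ℓ`: a nondecreasing `C¹` function `φ` with
`φ = g(q_ℓ * φ)`, `φ(-∞) = 0` and `φ(+∞) = 1`. -/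
structure IsTravelingWave (S : BistableSetting) (ℓ : ℝ) (φ : ℝ → ℝ) : Prop where
  mono : Monotone φ
  smooth : ContDiff ℝ 1 φ
  wave_eq : ∀ x, φ x = S.g (conv (qshift S.q ℓ) φ x)
  limit_bot : Tendsto φ atBot (𝓝 0)
  limit_top : Tendsto φ atTop (𝓝 1)

open Set

section Convolution

variable {k u : ℝ → ℝ}

theorem integrable_mul_comp_sub (hk : Continuous k) (hks : HasCompactSupport k)
    (hu : Continuous u) (x : ℝ) : Integrable (fun y => k y * u (x - y)) :=
  (hk.mul (hu.comp (continuous_const.sub continuous_id))).integrable_of_hasCompactSupport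
    hks.mul_right

theorem conv_qshift (k u : ℝ → ℝ) (ℓ x : ℝ) : conv (qshift k ℓ) u x = conv k u (x + ℓ) := by
  unfold conv qshift
  rw [← integral_add_right_eq_self (fun y => k y * u (x + ℓ - y)) ℓ]
  simp only [add_sub_add_right_eq_sub]

theorem conv_comp_neg (k u : ℝ → ℝ) (x : ℝ) :
    conv (fun y => k (-y)) (fun z => u (-z)) x = conv k u (-x) := by
  unfold conv
  rw [← integral_neg_eq_self (fun y => k y * u (-x - y))]
  congr 1 with y
  ring_nf

theorem conv_comp_add_add_const (hk : Continuous k) (hks : HasCompactSupport k)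
    (hk1 : ∫ y, k y = 1) (hu : Continuous u) (c B x : ℝ) :
    conv k (fun y => u (y + c) + B) x = conv k u (x + c) + B := by
  unfold conv
  simp only [mul_add, sub_add_eq_add_sub]
  rw [integral_add (integrable_mul_comp_sub hk hks hu _)
    ((hk.integrable_of_hasCompactSupport hks).mul_const B), integral_mul_const, hk1, one_mul]

theorem conv_one_sub (hk : Continuous k) (hks : HasCompactSupport k) (hk1 : ∫ y, k y = 1)
    (hu : Continuous u) (x : ℝ) : conv k (fun y => 1 - u y) x = 1 - conv k u x := by
  unfold conv
  simp only [mul_sub, mul_one]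
  rw [integral_sub (hk.integrable_of_hasCompactSupport hks) (integrable_mul_comp_sub hk hks hu _),
    hk1]

theorem conv_nonneg (hk0 : ∀ y, 0 ≤ k y) (hu0 : ∀ z, 0 ≤ u z) (x : ℝ) : 0 ≤ conv k u x :=
  integral_nonneg fun y => mul_nonneg (hk0 y) (hu0 _)

theorem eq_zero_of_conv_eq_zero (hk : Continuous k) (hks : HasCompactSupport k)
    (hk0 : ∀ y, 0 ≤ k y) (hu : Continuous u) (hu0 : ∀ z, 0 ≤ u z) {x : ℝ}
    (hx : conv k u x = 0) {y : ℝ} (hy : 0 < k y) : u (x - y) = 0 := by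
  have hcont : Continuous fun y => k y * u (x - y) :=
    hk.mul (hu.comp (continuous_const.sub continuous_id))
  have hae := (integral_eq_zero_iff_of_nonneg (fun y => mul_nonneg (hk0 y) (hu0 _))
    (integrable_mul_comp_sub hk hks hu x)).mp hx
  have hzero := congrFun ((hcont.ae_eq_iff_eq volume continuous_const).mp hae) y
  exact (mul_eq_zero.mp hzero).resolve_left hy.ne'

theorem conv_pos (hk : Continuous k) (hks : HasCompactSupport k) (hk0 : ∀ y, 0 ≤ k y)
    (hu : Continuous u) (hu0 : ∀ z, 0 < u z) {y : ℝ} (hy : 0 < k y) (x : ℝ) :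
    0 < conv k u x := by
  refine (conv_nonneg hk0 (fun z => (hu0 z).le) x).lt_of_ne' fun hx => ?_
  exact (hu0 (x - y)).ne' (eq_zero_of_conv_eq_zero hk hks hk0 hu (fun z => (hu0 z).le) hx hy)

theorem hasDerivAt_conv (hk : Continuous k) (hks : HasCompactSupport k) (hu : ContDiff ℝ 1 u)
    (x₀ : ℝ) : HasDerivAt (conv k u) (conv k (deriv u) x₀) x₀ := by
  have hu' : Continuous (deriv u) := hu.continuous_deriv le_rfl
  obtain ⟨R, hR⟩ := hks.isCompact.isBounded.subset_closedBall 0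
  obtain ⟨C, hC⟩ :=
    (isCompact_closedBall x₀ (1 + R)).exists_bound_of_continuousOn hu'.continuousOn
  have hbound : ∀ y, ∀ x ∈ Metric.ball x₀ 1, ‖k y * deriv u (x - y)‖ ≤ C * |k y| := by
    intro y x hx
    rcases eq_or_ne (k y) 0 with hy | hy
    · simp [hy]
    have hyR : ‖y‖ ≤ R := by simpa using hR (subset_tsupport k hy)
    have hxy : x - y ∈ Metric.closedBall x₀ (1 + R) := by
      rw [Metric.mem_closedBall, dist_eq_norm, sub_sub, add_comm y, ← sub_sub]
      refine (norm_sub_le _ _).trans (add_le_add (le_of_lt ?_) hyR)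
      rwa [← dist_eq_norm, ← Metric.mem_ball]
    rw [norm_mul, Real.norm_eq_abs, mul_comm]
    exact mul_le_mul_of_nonneg_right (hC _ hxy) (abs_nonneg _)
  have hdiff : ∀ y, ∀ x ∈ Metric.ball x₀ 1,
      HasDerivAt (fun x => k y * u (x - y)) (k y * deriv u (x - y)) x := fun y x _ =>
    (((hu.differentiable one_ne_zero) (x - y)).hasDerivAt.comp_sub_const x y).const_mul (k y)
  exact (hasDerivAt_integral_of_dominated_loc_of_deriv_le (Metric.ball_mem_nhds x₀ one_pos)
    (Eventually.of_forall fun x => (integrable_mul_comp_sub hk hks hu.continuous x).1)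
    (integrable_mul_comp_sub hk hks hu.continuous x₀)
    (integrable_mul_comp_sub hk hks hu' x₀).1 (Eventually.of_forall hbound)
    ((hk.integrable_of_hasCompactSupport hks).abs.const_mul C)
    (Eventually.of_forall hdiff)).2

theorem conv_add_le_mul_of_eq_zero {w t M : ℝ} (hk : Continuous k) (hks : HasCompactSupport k)
    (hk0 : ∀ y, 0 ≤ k y) (hkM : ∀ y, k y ≤ M) (hk_neg : ∀ y < 0, k y = 0) (hu : Continuous u)
    (hum : Monotone u) (hu0 : ∀ x, 0 ≤ u x) (hleft : ∀ z ≤ w, u z = 0) (ht : 0 ≤ t) :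
    conv k u (w + t) ≤ t * (M * u (w + t)) := calc
  conv k u (w + t) = ∫ y in Icc 0 t, k y * u (w + t - y) := by
      refine (setIntegral_eq_integral_of_forall_compl_eq_zero fun y hy => ?_).symm
      rcases lt_or_ge y 0 with hy0 | hy0
      · rw [hk_neg y hy0, zero_mul]
      · have : t < y := lt_of_not_ge fun hyt => hy ⟨hy0, hyt⟩
        rw [hleft _ (by linarith), mul_zero]
  _ ≤ ∫ _ in Icc 0 t, M * u (w + t) :=
      setIntegral_mono_on (integrable_mul_comp_sub hk hks hu _).integrableOn
        (integrableOn_const measure_Icc_lt_top.ne) measurableSet_Icc fun y hy =>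
          mul_le_mul (hkM y) (hum (by linarith [hy.1])) (hu0 _) ((hk0 0).trans (hkM 0))
  _ = t * (M * u (w + t)) := by
      rw [setIntegral_const, Real.volume_real_Icc_of_le ht, sub_zero, smul_eq_mul]

/-- If `u` vanished somewhere, its zero set would be a half-line `(-∞, w]`; `hzero` at `w`
confines `k` to `[0, ∞)`, and then `hle` gives `u (w + t) ≤ L ‖k‖∞ t u (w + t)`, so `u` would
vanish beyond `w` as well. -/
theorem pos_of_le_mul_conv {L : ℝ} (hk : Continuous k) (hks : HasCompactSupport k)
    (hk0 : ∀ y, 0 ≤ k y) (hu : Continuous u) (hum : Monotone u) (hu0 : ∀ x, 0 ≤ u x)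
    (hpos : ∃ x, 0 < u x) (hzero : ∀ x, u x = 0 → conv k u x = 0)
    (hle : ∀ x, u x ≤ L * conv k u x) (x : ℝ) : 0 < u x := by
  obtain ⟨x₁, hx₁⟩ := hpos
  refine (hu0 x).lt_of_ne' fun hx => ?_
  set Z := {z | u z = 0}
  have hZ : BddAbove Z := ⟨x₁, fun z hz => le_of_not_gt fun h =>
    hx₁.ne' (le_antisymm ((hum h.le).trans_eq hz) (hu0 _))⟩
  have hw : u (sSup Z) = 0 := (isClosed_eq hu continuous_const).csSup_mem ⟨x, hx⟩ hZ
  set w := sSup Z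
  have hleft : ∀ z ≤ w, u z = 0 := fun z hz => le_antisymm (hw ▸ hum hz) (hu0 z)
  have hk_neg : ∀ y < 0, k y = 0 := by
    intro y hy
    by_contra hne
    have := eq_zero_of_conv_eq_zero hk hks hk0 hu hu0 (hzero w hw) ((hk0 y).lt_of_ne' hne)
    linarith [le_csSup hZ this]
  obtain ⟨M, hM⟩ := hk.bounded_above_of_compact_support hks
  have hM0 : 0 ≤ M := (norm_nonneg _).trans (hM 0)
  have hL : 0 ≤ L := by
    by_contra! hL
    nlinarith [hle x₁, conv_nonneg hk0 hu0 x₁]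
  set t := 1 / (L * M + 1)
  have ht : 0 < t := by positivity
  have hLMt : L * M * t < 1 := by
    rw [mul_one_div, div_lt_one (by positivity)]
    linarith
  have hconv := conv_add_le_mul_of_eq_zero hk hks hk0 (fun y => (Real.le_norm_self _).trans (hM y))
    hk_neg hu hum hu0 hleft ht.le
  have hwt : u (w + t) = 0 := by
    have := (hle (w + t)).trans (mul_le_mul_of_nonneg_left hconv hL)
    nlinarith [hu0 (w + t)]
  linarith [le_csSup hZ hwt]

end Convolution

theorem exists_Ioo_pos_of_integral_ne_zero {k : ℝ → ℝ} (hk : Continuous k)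
    (hk0 : ∀ y, 0 ≤ k y) (h : ∫ y, k y ≠ 0) : ∃ a b, a < b ∧ ∀ y ∈ Ioo a b, 0 < k y := by
  obtain ⟨y₀, hy₀⟩ : ∃ y₀, k y₀ ≠ 0 := by
    by_contra! h0
    simp [h0] at h
  obtain ⟨ε, hε, hball⟩ :=
    Metric.isOpen_iff.mp (isOpen_lt continuous_const hk) y₀ ((hk0 y₀).lt_of_ne' hy₀)
  exact ⟨y₀ - ε, y₀ + ε, by linarith, fun y hy => hball (by rwa [Real.ball_eq_Ioo])⟩

theorem exists_Ici_subset_of_add_mem {T : Set ℝ} {x a b : ℝ} (hab : a < b) (hb : 0 < b)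
    (hx : x ∈ T) (hT : ∀ y ∈ T, ∀ c ∈ Ioo a b, y + c ∈ T) : ∃ R, Ici R ⊆ T := by
  set a' := max a (b / 2)
  have ha' : 0 < a' := lt_max_of_lt_right (by positivity)
  have hab' : a' < b := max_lt hab (by linarith)
  have hmul : ∀ c ∈ Ioo a b, ∀ n : ℕ, x + n * c ∈ T := by
    intro c hc n
    induction n with
    | zero => simpa using hx
    | succ n ih => simpa [add_mul, add_assoc] using hT _ ih c hc
  refine ⟨x + a' * b / (b - a') + 1, fun y hy => ?_⟩
  set e := (y - x) / b
  have hye : y - x = e * b := (div_mul_cancel₀ _ hb.ne').symm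
  have he : a' < e * (b - a') := by
    have h : a' * b < (y - x) * (b - a') :=
      (div_lt_iff₀ (sub_pos.2 hab')).1 (by linarith [mem_Ici.1 hy])
    rw [hye] at h
    exact lt_of_mul_lt_mul_right (by linarith) hb.le
  set n : ℕ := ⌊e⌋₊ + 1
  have hn : (0 : ℝ) < n := by positivity
  have hen : e < n := by simpa [n] using Nat.lt_floor_add_one e
  have hne : (n : ℝ) ≤ e + 1 := by
    have : 0 ≤ e := by nlinarith
    simpa [n] using Nat.floor_le this
  have hc : (y - x) / n ∈ Ioo a b := by
    rw [mem_Ioo, lt_div_iff₀ hn, div_lt_iff₀ hn, hye]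
    constructor <;> nlinarith [le_max_left a (b / 2)]
  simpa [mul_div_cancel₀ _ hn.ne'] using hmul _ hc n

theorem exists_Ici_or_Iic_subset_of_add_mem {T : Set ℝ} {x a b : ℝ} (hab : a < b) (hx : x ∈ T)
    (hT : ∀ y ∈ T, ∀ c ∈ Ioo a b, y + c ∈ T) : ∃ R, Ici R ⊆ T ∨ Iic R ⊆ T := by
  rcases lt_or_ge 0 b with hb | hb
  · obtain ⟨R, hR⟩ := exists_Ici_subset_of_add_mem hab hb hx hT
    exact ⟨R, Or.inl hR⟩
  · obtain ⟨R, hR⟩ := exists_Ici_subset_of_add_mem (T := {y | -y ∈ T}) (neg_lt_neg hab)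
      (by linarith) (x := -x) (by simpa using hx) fun y hy c hc => by
        show -(y + c) ∈ T
        rw [neg_add]
        exact hT (-y) hy (-c) ⟨by linarith [hc.2], by linarith [hc.1]⟩
    exact ⟨-R, Or.inr fun y hy => by simpa using hR (show R ≤ -y by linarith [mem_Iic.1 hy])⟩

theorem Convex.eq_of_deriv_eq_zero_of_tendsto {f : ℝ → ℝ} {s : Set ℝ} {l : Filter ℝ} [l.NeBot]
    {R c : ℝ} (hf : Differentiable ℝ f) (hs : Convex ℝ s) (hR : R ∈ s) (hsl : s ∈ l)
    (hd : ∀ y ∈ s, deriv f y = 0) (hlim : Tendsto f l (𝓝 c)) : f R = c := by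
  refine tendsto_nhds_unique (tendsto_const_nhds.congr' ?_) hlim
  filter_upwards [hsl] with y hy
  have := hs.norm_image_sub_le_of_norm_deriv_le (C := 0) (fun z _ => hf z)
    (fun z hz => by rw [hd z hz, norm_zero]) hR hy
  rwa [zero_mul, norm_le_zero_iff, sub_eq_zero, eq_comm] at this

theorem exists_monotone_bounded_of_summable {a : ℕ → ℝ} (ha : ∀ n, 0 ≤ a n) (hs : Summable a)
    (ξ₀ : ℝ) : ∃ ξ : ℕ → ℝ, ξ 0 = ξ₀ ∧ Monotone ξ ∧ (∃ C, ∀ n, |ξ n| ≤ C) ∧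
      ∀ n, ξ (n + 1) = ξ n + a n := by
  have hsum : ∀ n, ∑ i ∈ Finset.range n, a i ∈ Icc 0 (∑' i, a i) := fun n =>
    ⟨Finset.sum_nonneg fun i _ => ha i, hs.sum_le_tsum _ fun i _ => ha i⟩
  refine ⟨fun n => ξ₀ + ∑ i ∈ Finset.range n, a i, by simp,
    monotone_nat_of_le_succ fun n => by simp [Finset.sum_range_succ, ha n],
    ⟨|ξ₀| + ∑' i, a i, fun n => ?_⟩, fun n => by simp [Finset.sum_range_succ, add_assoc]⟩
  calc |ξ₀ + ∑ i ∈ Finset.range n, a i| ≤ |ξ₀| + |∑ i ∈ Finset.range n, a i| := abs_add_le _ _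
    _ ≤ |ξ₀| + ∑' i, a i := by rw [abs_of_nonneg (hsum n).1]; linarith [(hsum n).2]

theorem exists_antitone_bounded_of_summable {a : ℕ → ℝ} (ha : ∀ n, 0 ≤ a n) (hs : Summable a)
    (ξ₀ : ℝ) : ∃ ξ : ℕ → ℝ, ξ 0 = ξ₀ ∧ Antitone ξ ∧ (∃ C, ∀ n, |ξ n| ≤ C) ∧
      ∀ n, ξ (n + 1) = ξ n - a n := by
  obtain ⟨ξ, h0, hmono, ⟨C, hC⟩, hsucc⟩ := exists_monotone_bounded_of_summable ha hs (-ξ₀)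
  exact ⟨fun n => -ξ n, by simp [h0], hmono.neg, ⟨C, fun n => by simpa using hC n⟩,
    fun n => by simp [hsucc, sub_eq_add_neg, add_comm]⟩

namespace BistableSetting

variable (S : BistableSetting)

open Polynomial

theorem continuous_qshift (ℓ : ℝ) : Continuous (qshift S.q ℓ) :=
  S.hq_diff.continuous.comp (continuous_add_const ℓ)

theorem hasCompactSupport_qshift (ℓ : ℝ) : HasCompactSupport (qshift S.q ℓ) :=
  S.hq_supp.comp_homeomorph (Homeomorph.addRight ℓ)

theorem qshift_nonneg (ℓ y : ℝ) : 0 ≤ qshift S.q ℓ y := S.hq_nonneg _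

theorem integral_qshift (ℓ : ℝ) : ∫ y, qshift S.q ℓ y = 1 := by
  rw [← S.hq_int]
  exact integral_add_right_eq_self S.q ℓ

theorem exists_Ioo_qshift_pos (ℓ : ℝ) : ∃ a b, a < b ∧ ∀ y ∈ Ioo a b, 0 < qshift S.q ℓ y :=
  exists_Ioo_pos_of_integral_ne_zero (S.continuous_qshift ℓ) (S.qshift_nonneg ℓ)
    (by rw [S.integral_qshift]; exact one_ne_zero)

theorem conv_q_comp_sub_add_const {ℓ : ℝ} {u : ℝ → ℝ} (hu : Continuous u) (n : ℕ) (x c B : ℝ) :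
    conv S.q (fun y => u (y - n * ℓ + c) + B) x =
      conv (qshift S.q ℓ) u (x - (n + 1 : ℕ) * ℓ + c) + B := by
  simp only [sub_add_eq_add_sub, add_sub_assoc]
  rw [conv_comp_add_add_const S.hq_diff.continuous S.hq_supp S.hq_int hu, conv_qshift]
  push_cast
  ring_nf

theorem g_of_nonpos {x : ℝ} (hx : x ≤ 0) : S.g x = (derivative S.P).eval 0 * x := by
  rcases hx.lt_or_eq with hx | rfl
  · simp [g, hx]
  · simp [g, S.hP0]

theorem g_of_mem_Icc {x : ℝ} (hx : x ∈ Icc 0 1) : S.g x = S.P.eval x := by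
  simp [g, not_lt.2 hx.1, hx.2]

theorem g_of_one_le {x : ℝ} (hx : 1 ≤ x) : S.g x = 1 + (derivative S.P).eval 1 * (x - 1) := by
  rcases hx.lt_or_eq with hx | rfl
  · simp [g, not_lt.2 (zero_le_one.trans hx.le), not_le.2 hx]
  · simp [g, S.hP1]

theorem g_zero : S.g 0 = 0 := by simp [S.g_of_nonpos le_rfl]

theorem g_one : S.g 1 = 1 := by simp [S.g_of_one_le le_rfl]

/-- The linear extensions continue `P` with its one-sided slopes at `0` and `1`. -/
theorem hasDerivAt_g (x : ℝ) :
    HasDerivAt S.g ((derivative S.P).eval (max 0 (min x 1))) x := by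
  have piece : ∀ {s : Set ℝ} {f : ℝ → ℝ}, IsClosed s → EqOn S.g f s →
      (x ∈ s → HasDerivAt f ((derivative S.P).eval (max 0 (min x 1))) x) →
      HasDerivWithinAt S.g ((derivative S.P).eval (max 0 (min x 1))) s x := by
    intro s f hs hfs hf
    by_cases hx : x ∈ s
    · exact (hf hx).hasDerivWithinAt.congr hfs (hfs hx)
    · exact HasFDerivWithinAt.of_notMem_closure (by rwa [hs.closure_eq])
  have hlow := piece isClosed_Iic (fun y hy => S.g_of_nonpos hy) fun hx => by
    simpa [max_eq_left (min_le_of_left_le (mem_Iic.1 hx))] using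
      (hasDerivAt_id x).const_mul ((derivative S.P).eval 0)
  have hmid := piece isClosed_Icc (fun y hy => S.g_of_mem_Icc hy) fun hx => by
    simpa [min_eq_left hx.2, max_eq_right hx.1] using S.P.hasDerivAt x
  have hhigh := piece isClosed_Ici (fun y hy => S.g_of_one_le hy) fun hx => by
    simpa [min_eq_right (mem_Ici.1 hx)] using
      ((hasDerivAt_id x).sub_const 1).const_mul ((derivative S.P).eval 1) |>.const_add 1
  have := (hlow.union hmid).union hhigh
  rwa [Iic_union_Icc_eq_Iic zero_le_one, Iic_union_Ici, hasDerivWithinAt_univ] at this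

theorem differentiable_g : Differentiable ℝ S.g := fun x => (S.hasDerivAt_g x).differentiableAt

theorem deriv_g (x : ℝ) : deriv S.g x = (derivative S.P).eval (max 0 (min x 1)) :=
  (S.hasDerivAt_g x).deriv

theorem deriv_g_pos {x : ℝ} (hx : x ∈ Ioo 0 1) : 0 < deriv S.g x := by
  rw [S.deriv_g, min_eq_left hx.2.le, max_eq_right hx.1.le]
  exact S.hP_mono x hx

theorem strictMonoOn_g : StrictMonoOn S.g (Icc 0 1) :=
  strictMonoOn_of_deriv_pos (convex_Icc 0 1) S.differentiable_g.continuous.continuousOn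
    fun x hx => S.deriv_g_pos (by rwa [interior_Icc] at hx)

theorem g_sub_le_of_deriv_le {a b K : ℝ} (hab : a ≤ b) (hK : ∀ x ∈ Icc a b, deriv S.g x ≤ K) :
    S.g b - S.g a ≤ K * (b - a) :=
  (convex_Icc a b).image_sub_le_mul_sub_of_deriv_le S.differentiable_g.continuous.continuousOn
    S.differentiable_g.differentiableOn (fun x hx => hK x (interior_subset hx)) a
    (left_mem_Icc.2 hab) b (right_mem_Icc.2 hab) hab

theorem g_add_le_and_sub_ge {s β K : ℝ} (hβ : 0 ≤ β)
    (hK : ∀ x ∈ Icc (s - β) (s + β), deriv S.g x ≤ K) :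
    S.g (s + β) ≤ S.g s + K * β ∧ S.g s - K * β ≤ S.g (s - β) := by
  have hup := S.g_sub_le_of_deriv_le (by linarith : s ≤ s + β) fun x hx =>
    hK x ⟨by linarith [hx.1], hx.2⟩
  have hdown := S.g_sub_le_of_deriv_le (by linarith : s - β ≤ s) fun x hx =>
    hK x ⟨hx.1, by linarith [hx.2]⟩
  constructor <;> linarith

theorem exists_deriv_g_le : ∃ L, 0 < L ∧ ∀ x, deriv S.g x ≤ L := by
  obtain ⟨C, hC⟩ := (isCompact_Icc (a := (0 : ℝ)) (b := 1)).exists_bound_of_continuousOn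
    (derivative S.P).continuous.continuousOn
  refine ⟨max C 1, by positivity, fun x => ?_⟩
  rw [S.deriv_g]
  exact (Real.le_norm_self _).trans ((hC _ ⟨le_max_left _ _,
    max_le zero_le_one (min_le_right _ _)⟩).trans (le_max_left _ _))

theorem exists_deriv_g_le_lt_one : ∃ η r, 0 < η ∧ η < 1 ∧ 0 < r ∧ r < 1 ∧
    ∀ x ∉ Ioo η (1 - η), deriv S.g x ≤ r := by
  set P' := derivative S.P
  set r := max (1 / 2) ((1 + max (P'.eval 0) (P'.eval 1)) / 2)
  have hr0 : P'.eval 0 < r :=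
    lt_max_of_lt_right (by linarith [le_max_left (P'.eval 0) (P'.eval 1), S.hf'0])
  have hr1 : P'.eval 1 < r :=
    lt_max_of_lt_right (by linarith [le_max_right (P'.eval 0) (P'.eval 1), S.hf'1])
  obtain ⟨ε₀, hε₀, hb₀⟩ := Metric.eventually_nhds_iff.1
    (P'.continuous.continuousAt.eventually (eventually_lt_nhds hr0))
  obtain ⟨ε₁, hε₁, hb₁⟩ := Metric.eventually_nhds_iff.1
    (P'.continuous.continuousAt.eventually (eventually_lt_nhds hr1))
  obtain ⟨η, hη, hη₀, hη₁, hη1⟩ : ∃ η, 0 < η ∧ η < ε₀ ∧ η < ε₁ ∧ η < 1 := by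
    have hm : 0 < min (min ε₀ ε₁) 1 := by positivity
    refine ⟨min (min ε₀ ε₁) 1 / 2, by positivity, ?_, ?_, ?_⟩ <;>
      linarith [min_le_left (min ε₀ ε₁) 1, min_le_right (min ε₀ ε₁) 1, min_le_left ε₀ ε₁,
        min_le_right ε₀ ε₁]
  refine ⟨η, r, hη, hη1, by positivity,
    max_lt (by norm_num) (by linarith [max_lt S.hf'0 S.hf'1]), fun x hx => ?_⟩
  rw [S.deriv_g]
  rw [mem_Ioo, not_and_or, not_lt, not_lt] at hx
  rcases hx with hx | hx
  · refine (hb₀ ?_).le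
    rw [Real.dist_eq, sub_zero, abs_of_nonneg (le_max_left _ _)]
    exact (max_le hη.le ((min_le_left _ _).trans hx)).trans_lt hη₀
  · refine (hb₁ ?_).le
    rw [Real.dist_eq, abs_sub_comm,
      abs_of_nonneg (sub_nonneg.2 (max_le zero_le_one (min_le_right x 1)))]
    linarith [le_max_right 0 (min x 1), le_min hx (by linarith : 1 - η ≤ 1)]

end BistableSetting

namespace IsTravelingWave

variable {S : BistableSetting} {ℓ : ℝ} {φ : ℝ → ℝ} (h : IsTravelingWave S ℓ φ)
include h

theorem nonneg (x : ℝ) : 0 ≤ φ x := h.mono.le_of_tendsto h.limit_bot x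

theorem le_one (x : ℝ) : φ x ≤ 1 := h.mono.ge_of_tendsto h.limit_top x

theorem conv_mem_Icc (x : ℝ) : conv (qshift S.q ℓ) φ x ∈ Icc 0 1 := by
  have := conv_nonneg (S.qshift_nonneg ℓ) (fun y => sub_nonneg.2 (h.le_one y)) x
  rw [conv_one_sub (S.continuous_qshift ℓ) (S.hasCompactSupport_qshift ℓ) (S.integral_qshift ℓ)
    h.smooth.continuous] at this
  exact ⟨conv_nonneg (S.qshift_nonneg ℓ) h.nonneg x, by linarith⟩

theorem pos (x : ℝ) : 0 < φ x := by
  obtain ⟨L, -, hL⟩ := S.exists_deriv_g_le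
  refine pos_of_le_mul_conv (L := L) (S.continuous_qshift ℓ) (S.hasCompactSupport_qshift ℓ)
    (S.qshift_nonneg ℓ) h.smooth.continuous h.mono h.nonneg
    (h.limit_top.eventually (lt_mem_nhds one_pos)).exists (fun z hz => ?_) (fun z => ?_) x
  · rw [h.wave_eq z, ← S.g_zero] at hz
    exact S.strictMonoOn_g.injOn (h.conv_mem_Icc z) ⟨le_rfl, zero_le_one⟩ hz
  · have := S.g_sub_le_of_deriv_le (h.conv_mem_Icc z).1 fun y _ => hL y
    rwa [S.g_zero, sub_zero, sub_zero, ← h.wave_eq] at this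

/-- `x ↦ 1 - φ (-x)` satisfies the same convolution inequality as `φ`, for the reflected
kernel. -/
theorem lt_one (x : ℝ) : φ x < 1 := by
  obtain ⟨L, -, hL⟩ := S.exists_deriv_g_le
  have hconv : ∀ z, conv (fun y => qshift S.q ℓ (-y)) (fun z => 1 - φ (-z)) z =
      1 - conv (qshift S.q ℓ) φ (-z) := fun z => by
    rw [conv_comp_neg (qshift S.q ℓ) (fun y => 1 - φ y), conv_one_sub (S.continuous_qshift ℓ)
      (S.hasCompactSupport_qshift ℓ) (S.integral_qshift ℓ) h.smooth.continuous]
  have := pos_of_le_mul_conv (k := fun y => qshift S.q ℓ (-y)) (u := fun z => 1 - φ (-z))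
    (L := L) ((S.continuous_qshift ℓ).comp continuous_neg)
    ((S.hasCompactSupport_qshift ℓ).comp_homeomorph (Homeomorph.neg ℝ))
    (fun y => S.qshift_nonneg ℓ (-y))
    (continuous_const.sub (h.smooth.continuous.comp continuous_neg))
    (fun a b hab => sub_le_sub_left (h.mono (neg_le_neg hab)) 1)
    (fun z => sub_nonneg.2 (h.le_one (-z))) ?_ (fun z hz => ?_) (fun z => ?_) (-x)
  · simpa using this
  · obtain ⟨z, hz⟩ := (h.limit_bot.eventually (eventually_lt_nhds one_pos)).exists
    exact ⟨-z, by simpa using hz⟩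
  · rw [sub_eq_zero, h.wave_eq (-z), ← S.g_one] at hz
    rw [hconv, S.strictMonoOn_g.injOn (h.conv_mem_Icc (-z)) ⟨zero_le_one, le_rfl⟩ hz.symm,
      sub_self]
  · have := S.g_sub_le_of_deriv_le (h.conv_mem_Icc (-z)).2 fun y _ => hL y
    rwa [S.g_one, ← h.wave_eq, ← hconv] at this

theorem conv_pos (x : ℝ) : 0 < conv (qshift S.q ℓ) φ x := by
  obtain ⟨a, b, hab, hq⟩ := S.exists_Ioo_qshift_pos ℓ
  exact _root_.conv_pos (S.continuous_qshift ℓ) (S.hasCompactSupport_qshift ℓ)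
    (S.qshift_nonneg ℓ) h.smooth.continuous h.pos (hq ((a + b) / 2) ⟨by linarith, by linarith⟩) x

theorem conv_lt_one (x : ℝ) : conv (qshift S.q ℓ) φ x < 1 := by
  obtain ⟨a, b, hab, hq⟩ := S.exists_Ioo_qshift_pos ℓ
  have := _root_.conv_pos (u := fun y => 1 - φ y) (S.continuous_qshift ℓ)
    (S.hasCompactSupport_qshift ℓ) (S.qshift_nonneg ℓ) (continuous_const.sub h.smooth.continuous)
    (fun y => sub_pos.2 (h.lt_one y)) (hq ((a + b) / 2) ⟨by linarith, by linarith⟩) x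
  rw [conv_one_sub (S.continuous_qshift ℓ) (S.hasCompactSupport_qshift ℓ) (S.integral_qshift ℓ)
    h.smooth.continuous] at this
  linarith

theorem hasDerivAt (x : ℝ) : HasDerivAt φ
    (deriv S.g (conv (qshift S.q ℓ) φ x) * conv (qshift S.q ℓ) (deriv φ) x) x := by
  have hφ : S.g ∘ conv (qshift S.q ℓ) φ = φ := funext fun x => (h.wave_eq x).symm
  have := (S.differentiable_g _).hasDerivAt.comp x
    (hasDerivAt_conv (S.continuous_qshift ℓ) (S.hasCompactSupport_qshift ℓ) h.smooth x)
  rwa [hφ] at this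

theorem deriv_sub_eq_zero_of_deriv_eq_zero {x : ℝ} (hx : deriv φ x = 0) {y : ℝ}
    (hy : 0 < qshift S.q ℓ y) : deriv φ (x - y) = 0 := by
  rw [(h.hasDerivAt x).deriv] at hx
  exact eq_zero_of_conv_eq_zero (S.continuous_qshift ℓ) (S.hasCompactSupport_qshift ℓ)
    (S.qshift_nonneg ℓ) (h.smooth.continuous_deriv le_rfl) (fun z => h.mono.deriv_nonneg)
    ((mul_eq_zero.1 hx).resolve_left (S.deriv_g_pos ⟨h.conv_pos x, h.conv_lt_one x⟩).ne') hy

theorem deriv_pos (x : ℝ) : 0 < deriv φ x := by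
  refine h.mono.deriv_nonneg.lt_of_ne' fun hx => ?_
  obtain ⟨a, b, hab, hq⟩ := S.exists_Ioo_qshift_pos ℓ
  have hdiff : Differentiable ℝ φ := h.smooth.differentiable one_ne_zero
  obtain ⟨R, hR | hR⟩ := exists_Ici_or_Iic_subset_of_add_mem (T := {y | deriv φ y = 0})
    (neg_lt_neg hab) hx fun y hy c hc => by
      simpa using h.deriv_sub_eq_zero_of_deriv_eq_zero hy
        (hq (-c) ⟨by linarith [hc.2], by linarith [hc.1]⟩)
  · exact (h.lt_one R).ne ((convex_Ici R).eq_of_deriv_eq_zero_of_tendsto hdiff self_mem_Ici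
      (Ici_mem_atTop R) hR h.limit_top)
  · exact (h.pos R).ne' ((convex_Iic R).eq_of_deriv_eq_zero_of_tendsto hdiff self_mem_Iic
      (Iic_mem_atBot R) hR h.limit_bot)

theorem exists_mul_sub_le_sub (A B : ℝ) :
    ∃ m > 0, ∀ a ∈ Icc A B, ∀ b ∈ Icc A B, a ≤ b → m * (b - a) ≤ φ b - φ a := by
  obtain ⟨m, hm, hmin⟩ := isCompact_Icc.exists_forall_le'
    (h.smooth.continuous_deriv le_rfl).continuousOn fun x _ => h.deriv_pos x
  exact ⟨m, hm, (convex_Icc A B).mul_sub_le_image_sub_of_le_deriv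
    h.smooth.continuous.continuousOn (h.smooth.differentiable one_ne_zero).differentiableOn
    fun x hx => hmin x (interior_subset hx)⟩

theorem exists_Icc_of_conv_mem_Icc {c d : ℝ} (hc : 0 < c) (hcd : c ≤ d) (hd : d < 1) :
    ∃ A B, ∀ z, conv (qshift S.q ℓ) φ z ∈ Icc c d → z ∈ Icc A B := by
  have hc1 : c ∈ Icc (0 : ℝ) 1 := ⟨hc.le, by linarith⟩
  have hd1 : d ∈ Icc (0 : ℝ) 1 := ⟨by linarith, hd.le⟩
  have hgc : 0 < S.g c := S.g_zero ▸ S.strictMonoOn_g ⟨le_rfl, zero_le_one⟩ hc1 hc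
  have hgd : S.g d < 1 := S.g_one ▸ S.strictMonoOn_g hd1 ⟨zero_le_one, le_rfl⟩ hd
  obtain ⟨A, hA⟩ := eventually_atBot.1 (h.limit_bot.eventually (eventually_lt_nhds hgc))
  obtain ⟨B, hB⟩ := eventually_atTop.1 (h.limit_top.eventually (eventually_gt_nhds hgd))
  refine ⟨A, B, fun z hz => ?_⟩
  have hφc : S.g c ≤ φ z :=
    h.wave_eq z ▸ S.strictMonoOn_g.monotoneOn hc1 (h.conv_mem_Icc z) hz.1
  have hφd : φ z ≤ S.g d :=
    h.wave_eq z ▸ S.strictMonoOn_g.monotoneOn (h.conv_mem_Icc z) hd1 hz.2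
  exact ⟨le_of_not_ge fun hzA => (hA z hzA).not_ge hφc,
    le_of_not_ge fun hzB => (hB z hzB).not_ge hφd⟩

theorem exists_perturbation_constants : ∃ β₀ δ σ : ℝ, 0 < β₀ ∧ 0 < δ ∧ 0 < σ ∧
    ∀ β ∈ Ioc 0 β₀, ∀ z,
      S.g (conv (qshift S.q ℓ) φ z + β) ≤ φ (z + σ * β) + Real.exp (-δ) * β ∧
      φ (z - σ * β) - Real.exp (-δ) * β ≤ S.g (conv (qshift S.q ℓ) φ z - β) := by
  obtain ⟨η, r, hη, hη1, hr0, hr1, hend⟩ := S.exists_deriv_g_le_lt_one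
  obtain ⟨L, hL, hLg⟩ := S.exists_deriv_g_le
  obtain ⟨A, B, hAB⟩ := h.exists_Icc_of_conv_mem_Icc (c := η / 2) (d := 1 - η / 2)
    (by positivity) (by linarith) (by linarith)
  obtain ⟨m, hm, hslope⟩ := h.exists_mul_sub_le_sub (A - 1) (B + 1)
  refine ⟨min (η / 2) (m / L), -Real.log r, L / m, lt_min (by positivity) (by positivity),
    neg_pos.2 (Real.log_neg hr0 hr1), by positivity, fun β hβ z => ?_⟩
  rw [neg_neg, Real.exp_log hr0]
  set s := conv (qshift S.q ℓ) φ z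
  have hφz : φ z = S.g s := h.wave_eq z
  have hβη : β ≤ η / 2 := hβ.2.trans (min_le_left _ _)
  have hσβ : L / m * β ≤ 1 := by
    rw [div_mul_eq_mul_div, div_le_one hm, ← le_div_iff₀' hL]
    exact hβ.2.trans (min_le_right _ _)
  have hσβ0 : 0 ≤ L / m * β := by have := hβ.1; positivity
  by_cases hs : s ∈ Icc (η / 2) (1 - η / 2)
  · obtain ⟨hzA, hzB⟩ := hAB z hs
    have hup := hslope z ⟨by linarith, by linarith⟩ (z + L / m * β) ⟨by linarith, by linarith⟩
      (by linarith)
    have hdown := hslope (z - L / m * β) ⟨by linarith, by linarith⟩ z ⟨by linarith, by linarith⟩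
      (by linarith)
    have hmσ : m * (L / m * β) = L * β := by field_simp
    have hg := S.g_add_le_and_sub_ge (s := s) hβ.1.le fun x _ => hLg x
    have hrβ : 0 ≤ r * β := by have := hβ.1; positivity
    constructor <;> nlinarith
  · have hg := S.g_add_le_and_sub_ge (s := s) hβ.1.le fun x hx =>
      hend x fun hx' => hs ⟨by linarith [hx.2, hx'.1], by linarith [hx.1, hx'.2]⟩
    have := h.mono (by linarith : z ≤ z + L / m * β)
    have := h.mono (by linarith : z - L / m * β ≤ z)
    constructor <;> linarith

end IsTravelingWave

/-- Construction of super- and sub-solutions of the recursion `w_{n+1} = g(q * w_n)` by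
perturbing a traveling wave: there are `β₀^± > 0`, `δ₀^± > 0` such that for any initial
shift one finds a bounded monotone sequence of shifts making
`φ(x - nℓ + ξ_n^+) + β₀^+ e^{-δ₀^+ n}` a super-solution and
`φ(x - nℓ + ξ_n^-) - β₀^- e^{-δ₀^- n}` a sub-solution. -/
theorem traveling_wave_sub_super_solutions (S : BistableSetting) (ℓ : ℝ) (φ : ℝ → ℝ)
    (h : IsTravelingWave S ℓ φ) :
    ∃ βp δp βm δm : ℝ, 0 < βp ∧ 0 < δp ∧ 0 < βm ∧ 0 < δm ∧
      (∀ ξ₀ : ℝ, ∃ ξ : ℕ → ℝ, ξ 0 = ξ₀ ∧ Monotone ξ ∧ (∃ C, ∀ n, |ξ n| ≤ C) ∧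
        ∀ (n : ℕ) (x : ℝ),
          S.g (conv S.q (fun y => φ (y - n * ℓ + ξ n) + βp * Real.exp (-δp * n)) x) ≤
            φ (x - (n + 1 : ℕ) * ℓ + ξ (n + 1)) + βp * Real.exp (-δp * (n + 1 : ℕ))) ∧
      (∀ ξ₀ : ℝ, ∃ ξ : ℕ → ℝ, ξ 0 = ξ₀ ∧ Antitone ξ ∧ (∃ C, ∀ n, |ξ n| ≤ C) ∧
        ∀ (n : ℕ) (x : ℝ),
          φ (x - (n + 1 : ℕ) * ℓ + ξ (n + 1)) - βm * Real.exp (-δm * (n + 1 : ℕ)) ≤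
            S.g (conv S.q (fun y => φ (y - n * ℓ + ξ n) - βm * Real.exp (-δm * n)) x)) := by
  obtain ⟨β₀, δ, σ, hβ₀, hδ, hσ, hstep⟩ := h.exists_perturbation_constants
  set β : ℕ → ℝ := fun n => β₀ * Real.exp (-δ * n)
  have hβ : ∀ n : ℕ, β n ∈ Ioc 0 β₀ := fun n => ⟨by positivity,
    mul_le_of_le_one_right hβ₀.le (Real.exp_le_one_iff.2 (by nlinarith [n.cast_nonneg (α := ℝ)]))⟩
  have hβsucc : ∀ n : ℕ, β₀ * Real.exp (-δ * (n + 1 : ℕ)) = Real.exp (-δ) * β n := fun n => by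
    simp only [β, Nat.cast_succ, mul_add, mul_one, Real.exp_add]
    ring
  have hsum : Summable fun n => σ * β n := by
    simp only [β, mul_comm (-δ)]
    exact ((Real.summable_exp_nat_mul_iff.2 (neg_neg_of_pos hδ)).mul_left β₀).mul_left σ
  have hσβ : ∀ n, 0 ≤ σ * β n := fun n => (mul_pos hσ (hβ n).1).le
  refine ⟨β₀, δ, β₀, δ, hβ₀, hδ, hβ₀, hδ, fun ξ₀ => ?_, fun ξ₀ => ?_⟩
  · obtain ⟨ξ, h0, hmono, hbdd, hsucc⟩ := exists_monotone_bounded_of_summable hσβ hsum ξ₀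
    refine ⟨ξ, h0, hmono, hbdd, fun n x => ?_⟩
    rw [S.conv_q_comp_sub_add_const h.smooth.continuous, hsucc, hβsucc, ← add_assoc]
    exact (hstep _ (hβ n) _).1
  · obtain ⟨ξ, h0, hanti, hbdd, hsucc⟩ := exists_antitone_bounded_of_summable hσβ hsum ξ₀
    refine ⟨ξ, h0, hanti, hbdd, fun n x => ?_⟩
    have hconv := S.conv_q_comp_sub_add_const (ℓ := ℓ) h.smooth.continuous n x (ξ n) (-β n)
    simp only [← sub_eq_add_neg] at hconv
    rw [hconv, hsucc, hβsucc, ← add_sub_assoc]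
    exact (hstep _ (hβ n) _).2
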